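/- For every integer n ≥ 2, the Lucas-Catalan polynomial satisfies C_{n} = {2n-1 choose n-1}_L + t · {2n-1 choose n-2}_L, as an identity of polynomials in Z[s,t]. -/

import Mathlib

open MvPolynomial Finset

noncomputable section

/-- Polynomial ring ℤ[s,t] with s = X 0, t = X 1. -/
abbrev P2 : Type := MvPolynomial (Fin 2) ℤ

def ps : P2 := X 0
def pt : P2 := X 1

/-- The Lucas sequence of polynomials: {0}=0, {1}=1, {n}=s{n-1}+t{n-2}. -/
def lucas : ℕ → P2
  | 0 => 0
  | 1 => 1
  | (n+2) => ps * lucas (n+1) + pt * lucas n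

/-- The Lucastorial {n}! = {1}{2}⋯{n}. -/
def lucasFact (n : ℕ) : P2 := ∏ i ∈ Finset.range n, lucas (i+1)

/-- The d-divisible Lucastorial {n:d}! = {d}{2d}⋯{nd}. -/
def lucasFactD (d n : ℕ) : P2 := ∏ i ∈ Finset.range n, lucas (d*(i+1))

/-- A polynomial lies in ℕ[s,t]: all coefficients are nonnegative. -/
def Nonneg (p : P2) : Prop := ∀ m, 0 ≤ p.coeff m

/-- The fraction field ℤ(s,t). -/
abbrev K : Type := FractionRing P2

def φ : P2 →+* K := algebraMap P2 K

def L (n : ℕ) : K := φ (lucas n)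

def LFact (n : ℕ) : K := φ (lucasFact n)

def LFactD (d n : ℕ) : K := φ (lucasFactD d n)

/-- The Lucasnomial {n choose k}, as an element of the fraction field. -/
def lnom (n k : ℕ) : K := LFact n / (LFact k * LFact (n-k))

/-- The d-divisible Lucasnomial {n:d choose k:d}, as an element of the fraction field. -/
def lnomD (d n k : ℕ) : K := LFactD d n / (LFactD d k * LFactD d (n-k))

/-- The Lucas-Catalan number C_{n} = (1/{n+1}) {2n choose n}. -/
def catL (n : ℕ) : K := lnom (2*n) n / L (n+1)

/-- The Lucas-Fuss-Catalan number C_{n,k} = (1/{kn+1}) {(k+1)n choose n}. -/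
def fussCatL (n k : ℕ) : K := lnom ((k+1)*n) n / L (k*n+1)

/-
Split off the last factor of `{2n}!`: the addition formula `{a+b+1} = {a+1}{b+1} + t{a}{b}` gives
`{2n} = {n}({n+1} + t{n-1})`. Dividing by `{n}!² {n+1}`, the summand `{n+1}` cancels the denominator
`{n+1}` of the Catalan polynomial and leaves `{2n-1 choose n-1}`, while the summand `t{n-1}`, together
with the `{n}` in front, turns `{n}!²` into `{n-2}! {n+1}!` and leaves `t {2n-1 choose n-2}`.
All divisions happen in `ℤ(s,t)`, where `{k}` is nonzero for `k ≥ 1` since it evaluates to `1` at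
`s = 1, t = 0`.
-/

lemma lucas_add_two (n : ℕ) : lucas (n + 2) = ps * lucas (n + 1) + pt * lucas n := rfl

lemma eval_lucas_succ_of_one_zero : ∀ n, eval ![1, 0] (lucas (n + 1)) = 1
  | 0 => by simp [lucas]
  | 1 => by simp [lucas, ps, pt]
  | n + 2 => by
    rw [lucas_add_two]
    simp [ps, pt, eval_lucas_succ_of_one_zero (n + 1)]

lemma lucas_succ_ne_zero (n : ℕ) : lucas (n + 1) ≠ 0 := fun h => by
  simpa [h] using eval_lucas_succ_of_one_zero n

lemma lucas_add_add_one (a : ℕ) : ∀ b,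
    lucas (a + b + 1) = lucas (a + 1) * lucas (b + 1) + pt * lucas a * lucas b
  | 0 => by simp [lucas]
  | 1 => by simp [lucas]; ring
  | b + 2 => by
    rw [show a + (b + 2) + 1 = a + b + 1 + 2 by omega, lucas_add_two,
      show a + b + 1 + 1 = a + (b + 1) + 1 by omega, lucas_add_add_one a (b + 1),
      lucas_add_add_one a b, show b + 2 + 1 = b + 1 + 2 by omega, lucas_add_two (b + 1),
      lucas_add_two b]
    ring

lemma lucas_two_mul_add_two (m : ℕ) :
    lucas (2 * m + 2) = lucas (m + 1) * (lucas (m + 2) + pt * lucas m) := by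
  rw [show 2 * m + 2 = (m + 1) + m + 1 by omega, lucas_add_add_one]
  ring

lemma L_succ_ne_zero (n : ℕ) : L (n + 1) ≠ 0 :=
  (map_ne_zero_iff φ (IsFractionRing.injective P2 K)).mpr (lucas_succ_ne_zero n)

lemma LFact_ne_zero (n : ℕ) : LFact n ≠ 0 :=
  (map_ne_zero_iff φ (IsFractionRing.injective P2 K)).mpr <|
    Finset.prod_ne_zero_iff.mpr fun i _ => lucas_succ_ne_zero i

lemma LFact_succ (n : ℕ) : LFact (n + 1) = LFact n * L (n + 1) := by
  simp only [LFact, L, lucasFact, Finset.prod_range_succ, map_mul]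

lemma lnom_add (a b : ℕ) : lnom (a + b) a = LFact (a + b) / (LFact a * LFact b) := by
  rw [lnom, Nat.add_sub_cancel_left]

lemma L_two_mul_add_two (m : ℕ) : L (2 * m + 2) = L (m + 1) * (L (m + 2) + φ pt * L m) := by
  simp only [L, lucas_two_mul_add_two, map_mul, map_add]

/-- for n ≥ 2, C_{n} = {2n-1 choose n-1} + t {2n-1 choose n-2}. -/
theorem lucasCatalan_identity (n : ℕ) (hn : 2 ≤ n) :
    catL n = lnom (2*n-1) (n-1) + φ pt * lnom (2*n-1) (n-2) := by
  obtain ⟨m, rfl⟩ : ∃ m, n = m + 2 := ⟨n - 2, by omega⟩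
  have hcat : catL (m + 2) = LFact (2 * m + 3) * L (2 * (m + 1) + 2) /
      (LFact (m + 2) * LFact (m + 2) * L (m + 3)) := by
    rw [catL, show 2 * (m + 2) = (m + 2) + (m + 2) by omega, lnom_add,
      show m + 2 + (m + 2) = 2 * m + 3 + 1 by omega, LFact_succ, div_div,
      show 2 * m + 3 + 1 = 2 * (m + 1) + 2 by omega]
  have hfirst : lnom (2 * (m + 2) - 1) (m + 2 - 1) =
      LFact (2 * m + 3) / (LFact (m + 1) * LFact (m + 2)) := by
    rw [show 2 * (m + 2) - 1 = (m + 1) + (m + 2) by omega, show m + 2 - 1 = m + 1 by omega,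
      lnom_add, show m + 1 + (m + 2) = 2 * m + 3 by omega]
  have hsecond : lnom (2 * (m + 2) - 1) (m + 2 - 2) =
      LFact (2 * m + 3) / (LFact m * LFact (m + 3)) := by
    rw [show 2 * (m + 2) - 1 = m + (m + 3) by omega, Nat.add_sub_cancel, lnom_add,
      show m + (m + 3) = 2 * m + 3 by omega]
  have := L_succ_ne_zero m
  have := L_succ_ne_zero (m + 1)
  have := L_succ_ne_zero (m + 2)
  have := LFact_ne_zero m
  have := LFact_ne_zero (2 * m + 3)
  rw [hcat, hfirst, hsecond, L_two_mul_add_two, LFact_succ (m + 2), LFact_succ (m + 1),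
    LFact_succ m]
  field_simp
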